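/- For every scalar τ ≥ 0 and every matrix W ∈ ℝ^{n×d} with singular value decomposition W = U Σ Vᵀ (U ∈ ℝ^{n×r}, V ∈ ℝ^{d×r} having orthonormal columns and Σ = diag(σ₁,…,σ_r) with σ_i > 0), the singular value shrinkage operator P_τ(W) := U diag(max(σ₁−τ,0),…,max(σ_r−τ,0)) Vᵀ is the unique minimizer over X ∈ ℝ^{n×d} of the function X ↦ ½‖X − W‖_F² + τ‖X‖_*. -/

import Mathlib

/-! The trace norm is dual to the operator norm: `tr (Xᵀ * Y) ≤ ‖X‖_* * ‖Y‖`, with equality when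
`Y` is the polar factor of `X`. For `P = U * diagonal [σ - τ]₊ * Vᵀ` the residual
`W - P = U * diagonal (min σ τ) * Vᵀ` has operator norm at most `τ`, and
`tr (Pᵀ * (W - P)) = τ * ∑ [σᵢ - τ]₊ ≥ τ * ‖P‖_*`: `W - P` is `τ` times a subgradient of the
trace norm at `P`. Expanding the square, the objective `f X = ½ ‖X - W‖_F² + τ * ‖X‖_*` satisfies
`f X - f P ≥ ½ ‖X - P‖_F² + (τ * ‖X‖_* - tr (Xᵀ * (W - P))) ≥ ½ ‖X - P‖_F² > 0`. -/

open Matrix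

/-- The trace norm (nuclear norm) of a real matrix: the sum of its singular
values, i.e. the sum of the square roots of the eigenvalues of `Mᵀ * M`. -/
noncomputable def traceNorm {n d : ℕ} (M : Matrix (Fin n) (Fin d) ℝ) : ℝ :=
  ∑ i, Real.sqrt (((by simpa [Matrix.conjTranspose_eq_transpose_of_trivial] using
    Matrix.isHermitian_conjTranspose_mul_self M : (Mᵀ * M).IsHermitian)).eigenvalues i)

/-- The squared Frobenius norm of a real matrix. -/
noncomputable def frobSq {n d : ℕ} (M : Matrix (Fin n) (Fin d) ℝ) : ℝ :=
  ∑ i, ∑ j, (M i j)^2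

open scoped Matrix.Norms.L2Operator

namespace Matrix

section L2OpNorm

variable {𝕜 : Type*} [RCLike 𝕜] {l m n : Type*} [Fintype l] [Fintype m] [Fintype n]

lemma norm_entry_le_l2_opNorm [DecidableEq n] (M : Matrix m n 𝕜) (i : m) (j : n) :
    ‖M i j‖ ≤ ‖M‖ := by
  calc ‖M i j‖ = ‖(EuclideanSpace.equiv m 𝕜).symm (M *ᵥ EuclideanSpace.single j 1) i‖ := by
        simp
    _ ≤ ‖(EuclideanSpace.equiv m 𝕜).symm (M *ᵥ EuclideanSpace.single j 1)‖ :=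
        PiLp.norm_apply_le _ _
    _ ≤ ‖M‖ := by simpa using M.l2_opNorm_mulVec (EuclideanSpace.single j 1)

lemma l2_opNorm_le_one_of_conjTranspose_mul_self_eq_one [DecidableEq n] {A : Matrix m n 𝕜}
    (hA : Aᴴ * A = 1) : ‖A‖ ≤ 1 := by
  have h1 : ‖(1 : Matrix n n 𝕜)‖ ≤ 1 := by
    rw [← diagonal_one, l2_opNorm_diagonal]
    exact pi_norm_le_iff_of_nonneg zero_le_one |>.2 fun _ => by simp
  have : ‖A‖ * ‖A‖ ≤ 1 := by rwa [← l2_opNorm_conjTranspose_mul_self, hA]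
  nlinarith [norm_nonneg A]

lemma l2_opNorm_transpose [DecidableEq m] [DecidableEq n] (A : Matrix m n ℝ) : ‖Aᵀ‖ = ‖A‖ := by
  rw [← conjTranspose_eq_transpose_of_trivial, l2_opNorm_conjTranspose]

lemma l2_opNorm_le_one_of_transpose_mul_self_eq_one [DecidableEq n] {A : Matrix m n ℝ}
    (hA : Aᵀ * A = 1) : ‖A‖ ≤ 1 :=
  l2_opNorm_le_one_of_conjTranspose_mul_self_eq_one <| by
    rwa [conjTranspose_eq_transpose_of_trivial]

lemma l2_opNorm_mul_diagonal_mul_transpose_le [DecidableEq l] [DecidableEq n]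
    {A : Matrix m l ℝ} {B : Matrix n l ℝ} (hA : Aᵀ * A = 1) (hB : Bᵀ * B = 1) (c : l → ℝ) :
    ‖A * diagonal c * Bᵀ‖ ≤ ‖c‖ := by
  calc ‖A * diagonal c * Bᵀ‖ ≤ ‖A‖ * ‖c‖ * ‖B‖ := by
        grw [l2_opNorm_mul, l2_opNorm_mul, l2_opNorm_diagonal, l2_opNorm_transpose]
    _ ≤ 1 * ‖c‖ * 1 := by
        gcongr
        · exact l2_opNorm_le_one_of_transpose_mul_self_eq_one hA
        · exact l2_opNorm_le_one_of_transpose_mul_self_eq_one hB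
    _ = ‖c‖ := by ring

lemma trace_diagonal_mul_le_sum_mul_l2_opNorm [DecidableEq n] {s : n → ℝ} (hs : ∀ j, 0 ≤ s j)
    (M : Matrix n n ℝ) : (diagonal s * M).trace ≤ (∑ j, s j) * ‖M‖ := by
  rw [trace, Finset.sum_mul]
  refine Finset.sum_le_sum fun j _ => ?_
  rw [diag_apply, diagonal_mul]
  exact mul_le_mul_of_nonneg_left ((le_abs_self _).trans (norm_entry_le_l2_opNorm M j j)) (hs j)

end L2OpNorm

section Polar

variable {m n : Type*} [Fintype m] [Fintype n] [DecidableEq n]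

lemma mul_diagonal_eq_zero_of_transpose_mul_self_eq_diagonal {B : Matrix m n ℝ} {μ e : n → ℝ}
    (hB : Bᵀ * B = diagonal μ) (he : ∀ j, μ j = 0 ∨ e j = 0) : B * diagonal e = 0 := by
  rw [← conjTranspose_mul_self_eq_zero, conjTranspose_eq_transpose_of_trivial, transpose_mul,
    diagonal_transpose, Matrix.mul_assoc, ← Matrix.mul_assoc Bᵀ, hB, diagonal_mul_diagonal,
    diagonal_mul_diagonal, diagonal_eq_zero]
  funext j
  rcases he j with h | h <;> simp [h]

/-- For an orthogonal `Q` with `(X * Q)ᵀ * (X * Q) = diagonal μ`, the partial isometry `Z` of the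
polar decomposition `X = Z * (Q * diagonal √μ * Qᵀ)`; since `(√0)⁻¹ = 0` it vanishes on the
kernel of `X`. -/
noncomputable def polarFactor (X : Matrix m n ℝ) (Q : Matrix n n ℝ) (μ : n → ℝ) : Matrix m n ℝ :=
  X * Q * diagonal (fun j => (√(μ j))⁻¹) * Qᵀ

variable {X : Matrix m n ℝ} {Q : Matrix n n ℝ} {μ : n → ℝ}

lemma transpose_mul_polarFactor (hQ : Q * Qᵀ = 1) (hX : (X * Q)ᵀ * (X * Q) = diagonal μ) :
    Xᵀ * polarFactor X Q μ = Q * diagonal (fun j => √(μ j)) * Qᵀ := by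
  calc Xᵀ * polarFactor X Q μ
      = Q * ((X * Q)ᵀ * (X * Q)) * diagonal (fun j => (√(μ j))⁻¹) * Qᵀ := by
        simp only [polarFactor, transpose_mul, Matrix.mul_assoc]
        rw [← Matrix.mul_assoc Q Qᵀ, hQ, Matrix.one_mul]
    _ = Q * diagonal (fun j => √(μ j)) * Qᵀ := by
        rw [hX, Matrix.mul_assoc Q, diagonal_mul_diagonal]
        simp only [← div_eq_mul_inv, Real.div_sqrt]

lemma transpose_polarFactor_mul_self (hX : (X * Q)ᵀ * (X * Q) = diagonal μ) :
    (polarFactor X Q μ)ᵀ * polarFactor X Q μ =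
      Q * diagonal (fun j => (√(μ j))⁻¹ * μ j * (√(μ j))⁻¹) * Qᵀ := by
  calc (polarFactor X Q μ)ᵀ * polarFactor X Q μ
      = Q * (diagonal (fun j => (√(μ j))⁻¹) * ((X * Q)ᵀ * (X * Q)) *
          diagonal (fun j => (√(μ j))⁻¹)) * Qᵀ := by
        simp only [polarFactor, transpose_mul, diagonal_transpose, transpose_transpose,
          Matrix.mul_assoc]
    _ = _ := by rw [hX, diagonal_mul_diagonal, diagonal_mul_diagonal]

lemma l2_opNorm_polarFactor_le (hQ : Q * Qᵀ = 1) (hX : (X * Q)ᵀ * (X * Q) = diagonal μ) :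
    ‖polarFactor X Q μ‖ ≤ 1 := by
  have hQ' : Qᵀ * Q = 1 := mul_eq_one_comm.1 hQ
  have hgram : ‖(polarFactor X Q μ)ᴴ * polarFactor X Q μ‖ ≤ 1 := by
    rw [conjTranspose_eq_transpose_of_trivial, transpose_polarFactor_mul_self hX]
    refine (l2_opNorm_mul_diagonal_mul_transpose_le hQ' hQ' _).trans ?_
    refine pi_norm_le_iff_of_nonneg zero_le_one |>.2 fun j => ?_
    rcases le_or_gt (μ j) 0 with h | h
    · simp [Real.sqrt_eq_zero'.2 h]
    · have : (√(μ j))⁻¹ * μ j * (√(μ j))⁻¹ = 1 := by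
        field_simp
        exact (Real.sq_sqrt h.le).symm
      simp [this]
  rw [l2_opNorm_conjTranspose_mul_self] at hgram
  nlinarith [norm_nonneg (polarFactor X Q μ)]

lemma polarFactor_mul (hQ : Q * Qᵀ = 1) (hX : (X * Q)ᵀ * (X * Q) = diagonal μ)
    (hμ : ∀ j, 0 ≤ μ j) : polarFactor X Q μ * (Q * diagonal (fun j => √(μ j)) * Qᵀ) = X := by
  have hker : X * Q * diagonal (fun j => 1 - (√(μ j))⁻¹ * √(μ j)) = 0 := by
    refine mul_diagonal_eq_zero_of_transpose_mul_self_eq_diagonal hX fun j => ?_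
    rcases (hμ j).eq_or_lt with h | h
    · exact .inl h.symm
    · exact .inr (by rw [inv_mul_cancel₀ (Real.sqrt_pos.2 h).ne', sub_self])
  rw [← diagonal_sub (fun _ => 1), Matrix.mul_sub, diagonal_one, Matrix.mul_one,
    sub_eq_zero] at hker
  calc polarFactor X Q μ * (Q * diagonal (fun j => √(μ j)) * Qᵀ)
      = X * Q * diagonal (fun j => (√(μ j))⁻¹ * √(μ j)) * Qᵀ := by
        simp only [polarFactor, Matrix.mul_assoc]
        rw [← Matrix.mul_assoc Qᵀ Q, mul_eq_one_comm.1 hQ, Matrix.one_mul,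
          ← Matrix.mul_assoc (diagonal _), diagonal_mul_diagonal]
    _ = X := by rw [← hker, Matrix.mul_assoc, hQ, Matrix.mul_one]

end Polar

lemma trace_transpose_mul_eq_sum_mul_of_orthonormal {ι m n : Type*} [Fintype ι] [Fintype m]
    [Fintype n] [DecidableEq ι] {U : Matrix m ι ℝ} {V : Matrix n ι ℝ} (hU : Uᵀ * U = 1)
    (hV : Vᵀ * V = 1) (a b : ι → ℝ) :
    ((U * diagonal a * Vᵀ)ᵀ * (U * diagonal b * Vᵀ)).trace = ∑ j, a j * b j := by
  simp only [transpose_mul, transpose_transpose, diagonal_transpose, Matrix.mul_assoc]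
  rw [← Matrix.mul_assoc Uᵀ U, hU, Matrix.one_mul, trace_mul_comm, Matrix.mul_assoc,
    Matrix.mul_assoc, hV, Matrix.mul_one, diagonal_mul_diagonal, trace_diagonal]

end Matrix

section FinMatrix

variable {n d : ℕ}

lemma traceNorm_nonneg (X : Matrix (Fin n) (Fin d) ℝ) : 0 ≤ traceNorm X :=
  Finset.sum_nonneg fun _ _ => Real.sqrt_nonneg _

lemma exists_traceNorm_eq_sum_sqrt (X : Matrix (Fin n) (Fin d) ℝ) :
    ∃ (Q : Matrix (Fin d) (Fin d) ℝ) (μ : Fin d → ℝ), Q * Qᵀ = 1 ∧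
      (X * Q)ᵀ * (X * Q) = diagonal μ ∧ (∀ j, 0 ≤ μ j) ∧ traceNorm X = ∑ j, √(μ j) := by
  have hP : (Xᵀ * X).PosSemidef := by
    simpa [conjTranspose_eq_transpose_of_trivial] using posSemidef_conjTranspose_mul_self X
  have hH := hP.isHermitian
  refine ⟨hH.eigenvectorUnitary, hH.eigenvalues, ?_, ?_, hP.eigenvalues_nonneg, rfl⟩
  · have := Unitary.coe_mul_star_self hH.eigenvectorUnitary
    rwa [Unitary.coe_star, star_eq_conjTranspose, conjTranspose_eq_transpose_of_trivial] at this
  · have := hH.conjStarAlgAut_star_eigenvectorUnitary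
    rw [Unitary.conjStarAlgAut_star_apply, star_eq_conjTranspose,
      conjTranspose_eq_transpose_of_trivial] at this
    simpa [transpose_mul, Matrix.mul_assoc] using this

lemma trace_transpose_mul_le_traceNorm_mul_l2_opNorm (X Y : Matrix (Fin n) (Fin d) ℝ) :
    (Xᵀ * Y).trace ≤ traceNorm X * ‖Y‖ := by
  obtain ⟨Q, μ, hQ, hX, hμ, hnorm⟩ := exists_traceNorm_eq_sum_sqrt X
  set Z := polarFactor X Q μ with hZ
  have hXt : Xᵀ = Q * diagonal (fun j => √(μ j)) * (Qᵀ * Zᵀ) := by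
    conv_lhs => rw [← polarFactor_mul hQ hX hμ, ← hZ]
    simp only [transpose_mul, transpose_transpose, diagonal_transpose, Matrix.mul_assoc]
  have hQ1 : ‖Q‖ ≤ 1 := l2_opNorm_le_one_of_transpose_mul_self_eq_one (mul_eq_one_comm.1 hQ)
  have hQZYQ : ‖Qᵀ * Zᵀ * Y * Q‖ ≤ ‖Y‖ :=
    calc ‖Qᵀ * Zᵀ * Y * Q‖ ≤ ‖Q‖ * ‖Z‖ * ‖Y‖ * ‖Q‖ := by
          grw [l2_opNorm_mul, l2_opNorm_mul, l2_opNorm_mul, l2_opNorm_transpose,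
            l2_opNorm_transpose]
      _ ≤ 1 * 1 * ‖Y‖ * 1 := by gcongr; exact l2_opNorm_polarFactor_le hQ hX
      _ = ‖Y‖ := by ring
  calc (Xᵀ * Y).trace = (diagonal (fun j => √(μ j)) * (Qᵀ * Zᵀ * Y * Q)).trace := by
        rw [hXt, Matrix.mul_assoc, Matrix.mul_assoc, trace_mul_comm]
        simp only [Matrix.mul_assoc]
    _ ≤ (∑ j, √(μ j)) * ‖Qᵀ * Zᵀ * Y * Q‖ :=
        trace_diagonal_mul_le_sum_mul_l2_opNorm (fun _ => Real.sqrt_nonneg _) _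
    _ ≤ traceNorm X * ‖Y‖ := by
        rw [hnorm]; exact mul_le_mul_of_nonneg_left hQZYQ (by positivity)

lemma exists_l2_opNorm_le_one_trace_eq_traceNorm (X : Matrix (Fin n) (Fin d) ℝ) :
    ∃ Z : Matrix (Fin n) (Fin d) ℝ, ‖Z‖ ≤ 1 ∧ (Xᵀ * Z).trace = traceNorm X := by
  obtain ⟨Q, μ, hQ, hX, -, hnorm⟩ := exists_traceNorm_eq_sum_sqrt X
  refine ⟨polarFactor X Q μ, l2_opNorm_polarFactor_le hQ hX, ?_⟩
  rw [transpose_mul_polarFactor hQ hX, trace_mul_cycle, mul_eq_one_comm.1 hQ, Matrix.one_mul,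
    trace_diagonal, hnorm]

lemma traceNorm_mul_diagonal_mul_transpose_le {ι : Type*} [Fintype ι] [DecidableEq ι]
    {U : Matrix (Fin n) ι ℝ} {V : Matrix (Fin d) ι ℝ} (hU : Uᵀ * U = 1) (hV : Vᵀ * V = 1)
    {a : ι → ℝ} (ha : ∀ j, 0 ≤ a j) : traceNorm (U * diagonal a * Vᵀ) ≤ ∑ j, a j := by
  obtain ⟨Z, hZ, htrace⟩ := exists_l2_opNorm_le_one_trace_eq_traceNorm (U * diagonal a * Vᵀ)
  have hUZV : ‖Uᵀ * Z * V‖ ≤ 1 :=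
    calc ‖Uᵀ * Z * V‖ ≤ ‖U‖ * ‖Z‖ * ‖V‖ := by
          grw [l2_opNorm_mul, l2_opNorm_mul, l2_opNorm_transpose]
      _ ≤ 1 * 1 * 1 := by
          gcongr
          exacts [l2_opNorm_le_one_of_transpose_mul_self_eq_one hU,
            l2_opNorm_le_one_of_transpose_mul_self_eq_one hV]
      _ = 1 := by ring
  calc traceNorm (U * diagonal a * Vᵀ) = (diagonal a * (Uᵀ * Z * V)).trace := by
        rw [← htrace]
        simp only [transpose_mul, transpose_transpose, diagonal_transpose, Matrix.mul_assoc]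
        rw [trace_mul_comm]
        simp only [Matrix.mul_assoc]
    _ ≤ (∑ j, a j) * ‖Uᵀ * Z * V‖ := trace_diagonal_mul_le_sum_mul_l2_opNorm ha _
    _ ≤ ∑ j, a j := mul_le_of_le_one_right (Finset.sum_nonneg fun j _ => ha j) hUZV

lemma frobSq_eq_trace (M : Matrix (Fin n) (Fin d) ℝ) : frobSq M = (Mᵀ * M).trace := by
  simp only [frobSq, trace, diag_apply, mul_apply, transpose_apply, sq]
  exact Finset.sum_comm

lemma frobSq_pos {M : Matrix (Fin n) (Fin d) ℝ} (hM : M ≠ 0) : 0 < frobSq M := by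
  have hne : (Mᴴ * M).trace ≠ 0 := mt trace_conjTranspose_mul_self_eq_zero_iff.1 hM
  rw [conjTranspose_eq_transpose_of_trivial, ← frobSq_eq_trace] at hne
  exact lt_of_le_of_ne (by unfold frobSq; positivity) hne.symm

lemma frobSq_add (A B : Matrix (Fin n) (Fin d) ℝ) :
    frobSq (A + B) = frobSq A + 2 * (Aᵀ * B).trace + frobSq B := by
  simp only [frobSq_eq_trace, transpose_add, Matrix.add_mul, Matrix.mul_add, trace_add]
  rw [← trace_transpose (Bᵀ * A), transpose_mul, transpose_transpose]
  ring

lemma half_frobSq_sub_add_traceNorm_lt_of_subgradient {τ : ℝ} {W P X : Matrix (Fin n) (Fin d) ℝ}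
    (hWP : ‖W - P‖ ≤ τ) (hP : τ * traceNorm P ≤ (Pᵀ * (W - P)).trace) (hX : X ≠ P) :
    1 / 2 * frobSq (P - W) + τ * traceNorm P < 1 / 2 * frobSq (X - W) + τ * traceNorm X := by
  have hXWP : (Xᵀ * (W - P)).trace ≤ traceNorm X * τ :=
    (trace_transpose_mul_le_traceNorm_mul_l2_opNorm X (W - P)).trans
      (mul_le_mul_of_nonneg_left hWP (traceNorm_nonneg X))
  have hexpand := frobSq_add (X - P) (P - W)
  have hcross : ((X - P)ᵀ * (P - W)).trace = (Pᵀ * (W - P)).trace - (Xᵀ * (W - P)).trace := by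
    simp only [transpose_sub, Matrix.sub_mul, Matrix.mul_sub, trace_sub]
    ring
  rw [sub_add_sub_cancel, hcross] at hexpand
  linarith [frobSq_pos (sub_ne_zero.2 hX)]

end FinMatrix

lemma abs_sub_max_sub_zero_le {σ τ : ℝ} (hτ : 0 ≤ τ) (hσ : -τ ≤ σ) :
    |σ - max (σ - τ) 0| ≤ τ :=
  abs_le.2 ⟨by linarith [max_le (by linarith : σ - τ ≤ σ + τ) (by linarith : (0 : ℝ) ≤ σ + τ)],
    by linarith [le_max_left (σ - τ) 0]⟩

lemma max_sub_zero_mul_sub_max (σ τ : ℝ) :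
    max (σ - τ) 0 * (σ - max (σ - τ) 0) = τ * max (σ - τ) 0 := by
  rcases le_total (σ - τ) 0 with h | h <;> simp [h, mul_comm]

/-- Theorem 2.1 of Cai–Candès–Shen: for τ ≥ 0 and W with SVD W = U Σ Vᵀ
(U, V with orthonormal columns, positive singular values σᵢ), the singular
value shrinkage P_τ(W) = U diag([σᵢ − τ]₊) Vᵀ is the unique minimizer of
X ↦ ½‖X − W‖_F² + τ‖X‖_*. -/
theorem svd_shrinkage_unique_minimizer {n d r : ℕ} (τ : ℝ) (hτ : 0 ≤ τ)
    (W : Matrix (Fin n) (Fin d) ℝ)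
    (U : Matrix (Fin n) (Fin r) ℝ) (V : Matrix (Fin d) (Fin r) ℝ)
    (σ : Fin r → ℝ) (hσ : ∀ i, 0 < σ i)
    (hU : Uᵀ * U = 1) (hV : Vᵀ * V = 1)
    (hW : W = U * Matrix.diagonal σ * Vᵀ) :
    ∀ X : Matrix (Fin n) (Fin d) ℝ,
      X ≠ U * Matrix.diagonal (fun i => max (σ i - τ) 0) * Vᵀ →
      (1/2) * frobSq (U * Matrix.diagonal (fun i => max (σ i - τ) 0) * Vᵀ - W)
          + τ * traceNorm (U * Matrix.diagonal (fun i => max (σ i - τ) 0) * Vᵀ)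
        < (1/2) * frobSq (X - W) + τ * traceNorm X := by
  intro X hX
  set a : Fin r → ℝ := fun i => max (σ i - τ) 0
  have hWP : W - U * diagonal a * Vᵀ = U * diagonal (fun i => σ i - a i) * Vᵀ := by
    rw [hW, ← Matrix.sub_mul, ← Matrix.mul_sub, diagonal_sub]
  refine half_frobSq_sub_add_traceNorm_lt_of_subgradient ?_ ?_ hX
  · rw [hWP]
    refine (l2_opNorm_mul_diagonal_mul_transpose_le hU hV _).trans ?_
    refine pi_norm_le_iff_of_nonneg hτ |>.2 fun j => ?_
    exact (Real.norm_eq_abs _).trans_le (abs_sub_max_sub_zero_le hτ (by linarith [hσ j]))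
  · rw [hWP, trace_transpose_mul_eq_sum_mul_of_orthonormal hU hV]
    calc τ * traceNorm (U * diagonal a * Vᵀ) ≤ τ * ∑ j, a j :=
          mul_le_mul_of_nonneg_left
            (traceNorm_mul_diagonal_mul_transpose_le hU hV fun j => le_max_right _ _) hτ
      _ = ∑ j, a j * (σ j - a j) := by
          rw [Finset.mul_sum]
          exact Finset.sum_congr rfl fun j _ => (max_sub_zero_mul_sub_max (σ j) τ).symm
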